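/- arXiv:1501.04499 — 3 statements merged into one kernel-verified Lean document; each statement's English description precedes it below -/
import Mathlib

section
/- Let $J \subseteq \mathbb{R}$ be an interval and let $\{X_n(\beta)\}_{n \ge 1, \beta \in J}$ and $\{X(\beta)\}_{\beta \in J}$ be families of nonnegative integrable random variables on a probability space. Assume: (1) for each $n$, the family $\{X_n(\beta)\}_{\beta \in J}$ is uniformly integrable; (2) $\{X(\beta)\}_{\beta \in J}$ is uniformly integrable; (3) for every $\varepsilon > 0$, $\lim_{n\to\infty} \sup_{\beta \in J} \mathbb{P}(|X_n(\beta) - X(\beta)| > \varepsilon) = 0$. Then $\lim_{n\to\infty} \sup_{\beta \in J} |\mathbb{E}(X_n(\beta)) - \mathbb{E}(X(\beta))| = 0$ if and only if the doubly-indexed family $\{X_n(\beta)\}_{n \ge 1, \beta \in J}$ is uniformly integrable. -/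
/-!
Cut at level `M`: where `|f - g| ≤ ε` the difference costs at most `ε`, elsewhere it costs at most
`2M` on a set of small probability plus the two tails above `M`. This bounds `|E f - E g|`, so
uniform integrability of the whole family gives uniform convergence of the means.

Conversely, for `f ≥ 0` the tail of `f` above `2c` is at most `2 E (f - min f c)`, and
`E (f - min f c) = (E f - E g) + E (g - min g c) + (E min g c - E min f c)`. Here the last term is
at most `ε + c P(|f - g| > ε)` because `0 ≤ min f c ≤ c`, and the middle one is at most the tail
of `g` above `c`. So, once `n` is large, the tails of all `X n β` are uniformly small at `2c`; the
finitely many remaining rows are uniformly integrable by assumption.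
-/

open MeasureTheory

/-- A family of random variables is uniformly integrable:
`lim_{M→∞} sup_i E(|Z_i| 1_{|Z_i| > M}) = 0`. -/
def UnifInt {Ω : Type*} [MeasurableSpace Ω] (P : Measure Ω) {I : Type*}
    (Z : I → Ω → ℝ) : Prop :=
  ∀ ε > (0 : ℝ), ∃ M : ℝ, 0 < M ∧ ∀ i : I,
    ∫ ω, Set.indicator {ω | M < |Z i ω|} (fun ω => |Z i ω|) ω ∂P ≤ ε

open Filter

noncomputable def tailPart {Ω : Type*} (Z : Ω → ℝ) (M : ℝ) : Ω → ℝ :=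
  {ω | M < |Z ω|}.indicator fun ω => |Z ω|

noncomputable def tailIntegral {Ω : Type*} [MeasurableSpace Ω] (P : Measure Ω) (Z : Ω → ℝ)
    (M : ℝ) : ℝ :=
  ∫ ω, tailPart Z M ω ∂P

section Tail

variable {Ω : Type*} {Z f g : Ω → ℝ} {M M' c ε : ℝ}

lemma tailPart_nonneg (ω : Ω) : 0 ≤ tailPart Z M ω :=
  Set.indicator_nonneg (fun _ _ => abs_nonneg _) ω

lemma tailPart_anti (h : M ≤ M') (ω : Ω) : tailPart Z M' ω ≤ tailPart Z M ω :=
  Set.indicator_le_indicator_of_subset (fun _ hx => h.trans_lt hx) (fun _ => abs_nonneg _) ω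

lemma tailPart_of_lt {ω : Ω} (h : M < |Z ω|) : tailPart Z M ω = |Z ω| :=
  Set.indicator_of_mem (s := {ω | M < |Z ω|}) h _

lemma tailPart_of_not_lt {ω : Ω} (h : ¬M < |Z ω|) : tailPart Z M ω = 0 :=
  Set.indicator_of_notMem (s := {ω | M < |Z ω|}) h _

lemma abs_le_add_tailPart (hM : 0 ≤ M) (ω : Ω) : |Z ω| ≤ M + tailPart Z M ω := by
  by_cases h : M < |Z ω|
  · rw [tailPart_of_lt h]
    linarith
  · rw [tailPart_of_not_lt h]
    linarith

lemma abs_sub_le_tailPart_add_tailPart (hε : 0 ≤ ε) (hM : 0 ≤ M) (ω : Ω) :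
    |f ω - g ω| ≤ ε + tailPart f M ω + tailPart g M ω
      + {ω | ε < |f ω - g ω|}.indicator (fun _ => 2 * M) ω := by
  have hf := abs_le_add_tailPart (Z := f) hM ω
  have hg := abs_le_add_tailPart (Z := g) hM ω
  have hf0 := tailPart_nonneg (Z := f) (M := M) ω
  have hg0 := tailPart_nonneg (Z := g) (M := M) ω
  by_cases h : ε < |f ω - g ω|
  · rw [Set.indicator_of_mem (show ω ∈ {ω | ε < |f ω - g ω|} from h)]
    linarith [abs_sub (f ω) (g ω)]
  · rw [Set.indicator_of_notMem (show ω ∉ {ω | ε < |f ω - g ω|} from h)]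
    linarith

lemma tailPart_two_mul_le (hε : 0 ≤ ε) (hc : 0 ≤ c) (ω : Ω) (hf : 0 ≤ f ω) :
    tailPart f (2 * c) ω ≤ 2 * (f ω - g ω + tailPart g c ω + ε
      + {ω | ε < |f ω - g ω|}.indicator (fun _ => c) ω) := by
  have hf_tail : tailPart f (2 * c) ω ≤ 2 * (f ω - min (f ω) c) := by
    by_cases h : 2 * c < |f ω|
    · rw [tailPart_of_lt h, abs_of_nonneg hf]
      rw [abs_of_nonneg hf] at h
      rw [min_eq_right (by linarith)]
      linarith
    · rw [tailPart_of_not_lt h]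
      linarith [min_le_left (f ω) c]
  have hg_tail : g ω - min (g ω) c ≤ tailPart g c ω := by
    by_cases h : c < |g ω|
    · rw [tailPart_of_lt h]
      rcases min_choice (g ω) c with hmin | hmin <;> rw [hmin] <;> linarith [le_abs_self (g ω)]
    · rw [tailPart_of_not_lt h, min_eq_left ((le_abs_self _).trans (not_lt.1 h)), sub_self]
  have hmin : min (g ω) c - min (f ω) c ≤ ε + {ω | ε < |f ω - g ω|}.indicator (fun _ => c) ω := by
    by_cases h : ε < |f ω - g ω|
    · rw [Set.indicator_of_mem (show ω ∈ {ω | ε < |f ω - g ω|} from h)]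
      linarith [min_le_right (g ω) c, le_min hf hc]
    · rw [Set.indicator_of_notMem (show ω ∉ {ω | ε < |f ω - g ω|} from h), add_zero,
        sub_le_iff_le_add', ← min_add_add_right]
      exact min_le_min (by linarith [neg_abs_le (f ω - g ω)]) (by linarith)
  linarith

variable [MeasurableSpace Ω] {P : Measure Ω}

lemma integrable_tailPart (hZ : Integrable Z P) (M : ℝ) : Integrable (tailPart Z M) P :=
  hZ.abs.indicator₀ (aestronglyMeasurable_const.nullMeasurableSet_lt hZ.abs.1)

lemma tailIntegral_anti (hZ : Integrable Z P) (h : M ≤ M') :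
    tailIntegral P Z M' ≤ tailIntegral P Z M :=
  integral_mono_of_nonneg (ae_of_all _ tailPart_nonneg) (integrable_tailPart hZ M)
    (ae_of_all _ (tailPart_anti h))

lemma unifInt_iff_eventually {ι : Type*} {Z : ι → Ω → ℝ} (hZ : ∀ i, Integrable (Z i) P) :
    UnifInt P Z ↔ ∀ ε > 0, ∀ᶠ M in atTop, ∀ i, tailIntegral P (Z i) M ≤ ε := by
  refine forall₂_congr fun ε _ => ⟨fun ⟨M, _, hM⟩ => ?_, fun h => ?_⟩
  · exact eventually_atTop.2 ⟨M, fun M' h i => (tailIntegral_anti (hZ i) h).trans (hM i)⟩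
  · exact (h.and (eventually_gt_atTop 0)).exists.imp fun M hM => ⟨hM.2, hM.1⟩

lemma integral_indicator_const₀ {E : Type*} [NormedAddCommGroup E] [NormedSpace ℝ E]
    [CompleteSpace E] {s : Set Ω} (hs : NullMeasurableSet s P) (e : E) :
    ∫ ω, s.indicator (fun _ => e) ω ∂P = P.real s • e := by
  rw [integral_indicator₀ hs, setIntegral_const]

variable [IsProbabilityMeasure P]

lemma abs_integral_sub_le (hf : Integrable f P) (hg : Integrable g P) (hε : 0 ≤ ε) (hM : 0 ≤ M) :
    |∫ ω, f ω ∂P - ∫ ω, g ω ∂P| ≤ ε + tailIntegral P f M + tailIntegral P g M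
      + 2 * M * P.real {ω | ε < |f ω - g ω|} := by
  have hA : NullMeasurableSet {ω | ε < |f ω - g ω|} P :=
    aestronglyMeasurable_const.nullMeasurableSet_lt (hf.sub hg).abs.1
  have hIf := integrable_tailPart hf M
  have hIg := integrable_tailPart hg M
  have hIA := (integrable_const (2 * M)).indicator₀ hA
  calc |∫ ω, f ω ∂P - ∫ ω, g ω ∂P| = |∫ ω, f ω - g ω ∂P| := by rw [integral_sub hf hg]
    _ ≤ ∫ ω, |f ω - g ω| ∂P := abs_integral_le_integral_abs
    _ ≤ ∫ ω, (ε + tailPart f M ω + tailPart g M ω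
          + {ω | ε < |f ω - g ω|}.indicator (fun _ => 2 * M) ω) ∂P :=
      integral_mono (hf.sub hg).abs ((((integrable_const ε).add hIf).add hIg).add hIA)
        (abs_sub_le_tailPart_add_tailPart hε hM)
    _ = _ := by
      rw [integral_add ?_ hIA, integral_add ?_ hIg, integral_add (integrable_const ε) hIf,
        integral_const, integral_indicator_const₀ hA, probReal_univ, one_smul, smul_eq_mul]
      · simp only [tailIntegral]
        ring
      exacts [(integrable_const ε).add hIf, ((integrable_const ε).add hIf).add hIg]

lemma tailIntegral_two_mul_le (hf : Integrable f P) (hg : Integrable g P) (hf0 : 0 ≤ f)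
    (hε : 0 ≤ ε) (hc : 0 ≤ c) :
    tailIntegral P f (2 * c) ≤ 2 * (∫ ω, f ω ∂P - ∫ ω, g ω ∂P + tailIntegral P g c + ε
      + c * P.real {ω | ε < |f ω - g ω|}) := by
  have hA : NullMeasurableSet {ω | ε < |f ω - g ω|} P :=
    aestronglyMeasurable_const.nullMeasurableSet_lt (hf.sub hg).abs.1
  have hIg := integrable_tailPart hg c
  have hIA := (integrable_const c).indicator₀ hA
  calc tailIntegral P f (2 * c)
      ≤ ∫ ω, 2 * (f ω - g ω + tailPart g c ω + ε
          + {ω | ε < |f ω - g ω|}.indicator (fun _ => c) ω) ∂P :=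
        integral_mono (integrable_tailPart hf _)
          (((((hf.sub hg).add hIg).add (integrable_const ε)).add hIA).const_mul 2)
          fun ω => tailPart_two_mul_le hε hc ω (hf0 ω)
    _ = _ := by
      rw [integral_const_mul, integral_add ?_ hIA, integral_add ?_ (integrable_const ε),
        integral_add ?_ hIg, integral_sub hf hg, integral_const,
        integral_indicator_const₀ hA, probReal_univ, one_smul, smul_eq_mul]
      · simp only [tailIntegral]
        ring
      exacts [hf.sub hg, (hf.sub hg).add hIg, ((hf.sub hg).add hIg).add (integrable_const ε)]

end Tail

section Families

variable {Ω ι : Type*} [MeasurableSpace Ω] {P : Measure Ω} {X : ℕ → ι → Ω → ℝ} {Y : ι → Ω → ℝ}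

lemma unifInt_prod_of_eventually (hX : ∀ n i, Integrable (X n i) P) (hrow : ∀ n, UnifInt P (X n))
    (h : ∀ ε > 0, ∃ N, ∀ᶠ M in atTop, ∀ n ≥ N, ∀ i, tailIntegral P (X n i) M ≤ ε) :
    UnifInt P (fun p : ℕ × ι => X p.1 p.2) := by
  refine (unifInt_iff_eventually fun p : ℕ × ι => hX p.1 p.2).2 fun ε hε => ?_
  obtain ⟨N, hlarge⟩ := h ε hε
  have hsmall : ∀ᶠ M in atTop, ∀ n ∈ Finset.range N, ∀ i, tailIntegral P (X n i) M ≤ ε :=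
    (eventually_all_finset _).2 fun n _ => (unifInt_iff_eventually (hX n)).1 (hrow n) ε hε
  filter_upwards [hlarge, hsmall] with M hM_large hM_small ⟨n, i⟩
  rcases lt_or_ge n N with hn | hn
  exacts [hM_small n (Finset.mem_range.2 hn) i, hM_large n hn i]

variable [IsProbabilityMeasure P]

theorem tendsto_integral_uniformly_of_unifInt (hX : ∀ n i, Integrable (X n i) P)
    (hY : ∀ i, Integrable (Y i) P) (hXui : UnifInt P (fun p : ℕ × ι => X p.1 p.2))
    (hYui : UnifInt P Y)
    (hprob : ∀ ε > 0, ∀ δ > 0, ∃ N, ∀ n ≥ N, ∀ i, P.real {ω | ε < |X n i ω - Y i ω|} ≤ δ) :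
    ∀ δ > 0, ∃ N, ∀ n ≥ N, ∀ i, |∫ ω, X n i ω ∂P - ∫ ω, Y i ω ∂P| ≤ δ := by
  intro δ hδ
  obtain ⟨M, hXM, hYM, hM⟩ :=
    (((unifInt_iff_eventually fun p : ℕ × ι => hX p.1 p.2).1 hXui (δ / 4) (by positivity)).and
      (((unifInt_iff_eventually hY).1 hYui (δ / 4) (by positivity)).and
        (eventually_gt_atTop 0))).exists
  obtain ⟨N, hN⟩ := hprob (δ / 4) (by positivity) (δ / (8 * M)) (by positivity)
  refine ⟨N, fun n hn i => ?_⟩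
  have hP := mul_le_mul_of_nonneg_left (hN n hn i) (by positivity : 0 ≤ 2 * M)
  have hMδ : 2 * M * (δ / (8 * M)) = δ / 4 := by field_simp; ring
  linarith [abs_integral_sub_le (hX n i) (hY i) (by positivity : (0 : ℝ) ≤ δ / 4) hM.le,
    hXM (n, i), hYM i]

theorem unifInt_of_tendsto_integral_uniformly (hX : ∀ n i, Integrable (X n i) P)
    (hY : ∀ i, Integrable (Y i) P) (hX0 : ∀ n i, 0 ≤ X n i) (hrow : ∀ n, UnifInt P (X n))
    (hYui : UnifInt P Y)
    (hprob : ∀ ε > 0, ∀ δ > 0, ∃ N, ∀ n ≥ N, ∀ i, P.real {ω | ε < |X n i ω - Y i ω|} ≤ δ)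
    (hmean : ∀ δ > 0, ∃ N, ∀ n ≥ N, ∀ i, |∫ ω, X n i ω ∂P - ∫ ω, Y i ω ∂P| ≤ δ) :
    UnifInt P (fun p : ℕ × ι => X p.1 p.2) := by
  refine unifInt_prod_of_eventually hX hrow fun ε hε => ?_
  obtain ⟨c, hc, hYc⟩ := hYui (ε / 8) (by positivity)
  obtain ⟨N₁, hN₁⟩ := hmean (ε / 8) (by positivity)
  obtain ⟨N₂, hN₂⟩ := hprob (ε / 8) (by positivity) (ε / (8 * c)) (by positivity)
  refine ⟨max N₁ N₂, (eventually_ge_atTop (2 * c)).mono fun M hM n hn i => ?_⟩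
  have hE := (abs_le.1 (hN₁ n (le_of_max_le_left hn) i)).2
  have hP := mul_le_mul_of_nonneg_left (hN₂ n (le_of_max_le_right hn) i) hc.le
  have hcε : c * (ε / (8 * c)) = ε / 8 := by field_simp
  have hYtail : tailIntegral P (Y i) c ≤ ε / 8 := hYc i
  calc tailIntegral P (X n i) M ≤ tailIntegral P (X n i) (2 * c) := tailIntegral_anti (hX n i) hM
    _ ≤ 2 * (∫ ω, X n i ω ∂P - ∫ ω, Y i ω ∂P + tailIntegral P (Y i) c + ε / 8
          + c * P.real {ω | ε / 8 < |X n i ω - Y i ω|}) :=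
      tailIntegral_two_mul_le (hX n i) (hY i) (hX0 n i) (by positivity) hc.le
    _ ≤ ε := by linarith

end Families

theorem stmt2_general {Ω : Type*} [MeasurableSpace Ω] (P : Measure Ω) [IsProbabilityMeasure P]
    (J : Set ℝ)
    (X : ℕ → ℝ → Ω → ℝ) (Xlim : ℝ → Ω → ℝ)
    (hXpos : ∀ n, ∀ β ∈ J, ∀ ω, 0 ≤ X n β ω)
    (hXint : ∀ n, ∀ β ∈ J, Integrable (X n β) P)
    (hXlimint : ∀ β ∈ J, Integrable (Xlim β) P)
    (h1 : ∀ n, UnifInt P (fun β : J => X n (β : ℝ)))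
    (h2 : UnifInt P (fun β : J => Xlim (β : ℝ)))
    (h3 : ∀ ε > (0 : ℝ), ∀ δ > (0 : ℝ), ∃ N : ℕ, ∀ n ≥ N, ∀ β ∈ J,
      (P {ω | ε < |X n β ω - Xlim β ω|}).toReal ≤ δ) :
    (∀ δ > (0 : ℝ), ∃ N : ℕ, ∀ n ≥ N, ∀ β ∈ J,
      |∫ ω, X n β ω ∂P - ∫ ω, Xlim β ω ∂P| ≤ δ) ↔
    UnifInt P (fun p : ℕ × J => X p.1 (p.2 : ℝ)) := by
  have hX (n : ℕ) (β : J) : Integrable (X n β) P := hXint n β β.2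
  have hY (β : J) : Integrable (Xlim β) P := hXlimint β β.2
  have hprob : ∀ ε > 0, ∀ δ > 0, ∃ N, ∀ n ≥ N, ∀ β : J,
      P.real {ω | ε < |X n β ω - Xlim β ω|} ≤ δ := fun ε hε δ hδ =>
    (h3 ε hε δ hδ).imp fun N hN n hn β => hN n hn β β.2
  constructor
  · intro hmean
    exact unifInt_of_tendsto_integral_uniformly hX hY (fun n β => hXpos n β β.2) h1 h2 hprob
      fun δ hδ => (hmean δ hδ).imp fun N hN n hn β => hN n hn β β.2
  · intro hXui δ hδ
    obtain ⟨N, hN⟩ := tendsto_integral_uniformly_of_unifInt hX hY hXui h2 hprob δ hδ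
    exact ⟨N, fun n hn β hβ => hN n hn ⟨β, hβ⟩⟩

/-- Given a family `X n β` of nonnegative integrable random variables,
`β` ranging over an interval `J`, and a limiting family `X β`, with (1) each
`{X n β}_{β∈J}` uniformly integrable, (2) `{X β}_{β∈J}` uniformly integrable, and
(3) `X n β → X β` in probability uniformly in `β`, one has:
`sup_{β∈J} |E(X n β) - E(X β)| → 0` iff the doubly-indexed family
`{X n β}_{n,β}` is uniformly integrable. -/
theorem stmt2 {Ω : Type*} [MeasurableSpace Ω] (P : Measure Ω) [IsProbabilityMeasure P]
    (J : Set ℝ) (hJ : J.OrdConnected)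
    (X : ℕ → ℝ → Ω → ℝ) (Xlim : ℝ → Ω → ℝ)
    (hXmeas : ∀ n, ∀ β ∈ J, Measurable (X n β))
    (hXlimmeas : ∀ β ∈ J, Measurable (Xlim β))
    (hXpos : ∀ n, ∀ β ∈ J, ∀ ω, 0 ≤ X n β ω)
    (hXlimpos : ∀ β ∈ J, ∀ ω, 0 ≤ Xlim β ω)
    (hXint : ∀ n, ∀ β ∈ J, Integrable (X n β) P)
    (hXlimint : ∀ β ∈ J, Integrable (Xlim β) P)
    (h1 : ∀ n, UnifInt P (fun β : J => X n (β : ℝ)))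
    (h2 : UnifInt P (fun β : J => Xlim (β : ℝ)))
    (h3 : ∀ ε > (0 : ℝ), ∀ δ > (0 : ℝ), ∃ N : ℕ, ∀ n ≥ N, ∀ β ∈ J,
      (P {ω | ε < |X n β ω - Xlim β ω|}).toReal ≤ δ) :
    (∀ δ > (0 : ℝ), ∃ N : ℕ, ∀ n ≥ N, ∀ β ∈ J,
      |∫ ω, X n β ω ∂P - ∫ ω, Xlim β ω ∂P| ≤ δ) ↔
    UnifInt P (fun p : ℕ × J => X p.1 (p.2 : ℝ)) :=
  stmt2_general P J X Xlim hXpos hXint hXlimint h1 h2 h3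
end

section
/- Let $(X'_n)_{n\ge 0}$ be a process on $\mathbb{Z}$ with $X'_0=0$ and bounded increments $|X'_{n+1}-X'_n| \le C_0$, and suppose there exist random times $0 = \tau_0 < \tau_1 < \tau_2 < \cdots$ and a constant $a \ge 1$ such that: the random variables $(X'_{\tau_{k+1}} - X'_{\tau_k}, \tau_{k+1}-\tau_k)_{k \ge 0}$ are i.i.d., $(X'_{\tau_k})_k$ is a martingale, $\mathbb{E}[\tau_1^2] < \infty$, and $\mathbb{E}[\tau_1] = a$. Then $\sup_{n \ge 1} \frac{1}{n} \mathbb{E}[\max_{0 \le i \le n} |X'_i|^2] < \infty$. -/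
/-!
Write `M k = X (τ k)` and `D k = C0 * (τ (k + 1) - τ k)`, so that `|M (k + 1) - M k| ≤ D k` and
`E[D k ^ 2] = C0 ^ 2 E[τ 1 ^ 2]` for every `k`. Orthogonality of martingale increments gives
`E[M n ^ 2] ≤ n C0 ^ 2 E[τ 1 ^ 2]`, and Doob's L² maximal inequality, applied to the nonnegative
submartingale `|M|`, bounds `E[max_{k ≤ n} M k ^ 2]` by four times that. Between two renewal times
the path moves by at most the gap `D k`, so `max_{i ≤ n} X i ^ 2` is at most
`2 max_{k ≤ n} M k ^ 2 + 2 ∑_{k ≤ n} D k ^ 2`, whose expectation is `O(n)`.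
-/

open MeasureTheory ProbabilityTheory Finset

theorem sum_partialSups_mul_sub_le (a : ℕ → ℝ) (n : ℕ) :
    ∑ k ∈ range n, partialSups a k * (a (k + 1) - a k)
      ≤ partialSups a n * a n - partialSups a n ^ 2 / 2 - a 0 ^ 2 / 2 := by
  induction n with
  | zero => simp only [sum_range_zero, partialSups_zero]; nlinarith
  | succ n ih =>
    rw [sum_range_succ, ← Order.succ_eq_add_one, partialSups_succ, Order.succ_eq_add_one]
    rcases le_total (a (n + 1)) (partialSups a n) with h | h
    · rw [sup_of_le_left h]; linarith
    · rw [sup_of_le_right h]; nlinarith [sq_nonneg (a (n + 1) - partialSups a n)]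

/-- The pathwise form of Doob's L² inequality: for a nonnegative submartingale the sum on the right
has nonnegative expectation. -/
theorem sq_partialSups_le (a : ℕ → ℝ) (n : ℕ) :
    partialSups a n ^ 2
      ≤ 4 * a n ^ 2 - 4 * ∑ k ∈ range n, partialSups a k * (a (k + 1) - a k) := by
  nlinarith [sum_partialSups_mul_sub_le a n, sq_nonneg (2 * a n - partialSups a n),
    sq_nonneg (a 0)]

theorem exists_le_lt_succ_of_strictMono {t : ℕ → ℕ} (ht : StrictMono t) (ht0 : t 0 = 0)
    (i : ℕ) : ∃ k ≤ i, t k ≤ i ∧ i < t (k + 1) := by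
  have hex : ∃ k, i < t (k + 1) := ⟨i, (Nat.lt_succ_self i).trans_le (ht.id_le _)⟩
  have hle : t (Nat.find hex) ≤ i := by
    rcases h : Nat.find hex with _ | k
    · simp [ht0]
    · exact not_lt.mp (Nat.find_min hex (h ▸ Nat.lt_succ_self k))
  exact ⟨Nat.find hex, (ht.id_le _).trans hle, hle, Nat.find_spec hex⟩

theorem abs_sub_le_mul_of_abs_succ_sub_le {x : ℕ → ℝ} {C : ℝ}
    (hx : ∀ n, |x (n + 1) - x n| ≤ C) {i j : ℕ} (hij : i ≤ j) : |x j - x i| ≤ C * (j - i) := by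
  induction j, hij using Nat.le_induction with
  | base => simp
  | succ j hij ih =>
    calc |x (j + 1) - x i| ≤ |x (j + 1) - x j| + |x j - x i| := abs_sub_le _ _ _
      _ ≤ C + C * (j - i) := add_le_add (hx j) ih
      _ = C * ((j + 1 : ℕ) - i) := by push_cast; ring

theorem partialSups_sq_abs_le_of_renewal {x : ℕ → ℝ} {C : ℝ} (hx : ∀ n, |x (n + 1) - x n| ≤ C)
    {t : ℕ → ℕ} (ht : StrictMono t) (ht0 : t 0 = 0) (n : ℕ) :
    partialSups (fun i => |x i| ^ 2) n ≤ 2 * partialSups (fun k => |x (t k)|) n ^ 2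
      + 2 * ∑ k ∈ range (n + 1), (C * ((t (k + 1) : ℝ) - t k)) ^ 2 := by
  refine partialSups_le _ _ _ fun i hin => ?_
  obtain ⟨k, hki, hk, hk'⟩ := exists_le_lt_succ_of_strictMono ht ht0 i
  have hC : 0 ≤ C := (abs_nonneg _).trans (hx 0)
  have hgap : ((i : ℝ) - t k) ≤ (t (k + 1) : ℝ) - t k := by gcongr
  have hxi : |x i| ≤ |x (t k)| + C * ((t (k + 1) : ℝ) - t k) := by
    calc |x i| ≤ |x (t k)| + |x i - x (t k)| := by
          linarith [abs_sub_abs_le_abs_sub (x i) (x (t k))]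
      _ ≤ |x (t k)| + C * ((t (k + 1) : ℝ) - t k) := by
        gcongr
        exact (abs_sub_le_mul_of_abs_succ_sub_le hx hk).trans (mul_le_mul_of_nonneg_left hgap hC)
  have hmax : |x (t k)| ≤ partialSups (fun k => |x (t k)|) n :=
    le_partialSups_of_le (fun k => |x (t k)|) (hki.trans hin)
  have hsum : (C * ((t (k + 1) : ℝ) - t k)) ^ 2
      ≤ ∑ k ∈ range (n + 1), (C * ((t (k + 1) : ℝ) - t k)) ^ 2 :=
    single_le_sum (f := fun k => (C * ((t (k + 1) : ℝ) - t k)) ^ 2) (fun _ _ => sq_nonneg _)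
      (mem_range.mpr (by omega))
  calc |x i| ^ 2 ≤ (|x (t k)| + C * ((t (k + 1) : ℝ) - t k)) ^ 2 :=
        pow_le_pow_left₀ (abs_nonneg _) hxi 2
    _ ≤ 2 * |x (t k)| ^ 2 + 2 * (C * ((t (k + 1) : ℝ) - t k)) ^ 2 := by
        nlinarith [sq_nonneg (|x (t k)| - C * ((t (k + 1) : ℝ) - t k))]
    _ ≤ _ := by gcongr

namespace MeasureTheory

variable {Ω : Type*} {m : MeasurableSpace Ω} {P : Measure Ω}

theorem StronglyMeasurable.partialSups {β : Type*} [TopologicalSpace β] [SemilatticeSup β]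
    [ContinuousSup β] {m' : MeasurableSpace Ω} {f : ℕ → Ω → β} {n : ℕ}
    (hf : ∀ k ≤ n, StronglyMeasurable[m'] (f k)) :
    StronglyMeasurable[m'] (partialSups f n) := by
  induction n with
  | zero => simpa using hf 0 le_rfl
  | succ n ih =>
    rw [← Order.succ_eq_add_one, partialSups_succ]
    exact (ih fun k hk => hf k (hk.trans n.le_succ)).sup (hf _ le_rfl)

theorem MemLp.partialSups {E : Type*} [NormedAddCommGroup E] [Lattice E] [HasSolidNorm E]
    [IsOrderedAddMonoid E] {p : ENNReal} {f : ℕ → Ω → E} (hf : ∀ k, MemLp (f k) p P) (n : ℕ) :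
    MemLp (partialSups f n) p P := by
  induction n with
  | zero => simpa using hf 0
  | succ n ih =>
    rw [← Order.succ_eq_add_one, partialSups_succ]
    exact ih.sup (hf _)

theorem memLp_of_abs_succ_sub_le {p : ENNReal} {f D : ℕ → Ω → ℝ}
    (hf : ∀ k, AEStronglyMeasurable (f k) P) (hf0 : MemLp (f 0) p P)
    (hD : ∀ k, MemLp (D k) p P) (hfD : ∀ k ω, |f (k + 1) ω - f k ω| ≤ D k ω) (n : ℕ) :
    MemLp (f n) p P := by
  induction n with
  | zero => exact hf0
  | succ n ih =>
    have hsub : MemLp (f (n + 1) - f n) p P :=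
      (hD n).of_le ((hf (n + 1)).sub (hf n)) (.of_forall fun ω => by
        simpa using (hfD n ω).trans (le_abs_self _))
    simpa using ih.add hsub

theorem integral_partialSups_sq_abs_le_of_renewal {X : ℕ → Ω → ℝ} {C : ℝ}
    (hX : ∀ n ω, |X (n + 1) ω - X n ω| ≤ C) {τ : ℕ → Ω → ℕ} (hτ : ∀ ω, StrictMono (τ · ω))
    (hτ0 : ∀ ω, τ 0 ω = 0) (n : ℕ)
    (hS : Integrable (fun ω => partialSups (fun k => |X (τ k ω) ω|) n ^ 2) P)
    (hD : ∀ k, Integrable (fun ω => (C * ((τ (k + 1) ω : ℝ) - τ k ω)) ^ 2) P) :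
    ∫ ω, partialSups (fun i => |X i ω| ^ 2) n ∂P
      ≤ 2 * ∫ ω, partialSups (fun k => |X (τ k ω) ω|) n ^ 2 ∂P
        + 2 * ∑ k ∈ range (n + 1), ∫ ω, (C * ((τ (k + 1) ω : ℝ) - τ k ω)) ^ 2 ∂P := by
  have hsum := integrable_finsetSum (range (n + 1)) fun k _ => hD k
  rw [← integral_finsetSum _ fun k _ => hD k, ← integral_const_mul, ← integral_const_mul,
    ← integral_add (hS.const_mul 2) (hsum.const_mul 2)]
  refine integral_mono_of_nonneg (.of_forall fun ω => ?_)
    ((hS.const_mul 2).add (hsum.const_mul 2)) (.of_forall fun ω => ?_)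
  · exact (sq_nonneg _).trans (le_partialSups_of_le (fun i => |X i ω| ^ 2) n.zero_le)
  · simpa only [Finset.sum_apply] using
      partialSups_sq_abs_le_of_renewal (hX · ω) (hτ ω) (hτ0 ω) n

theorem memLp_const_mul_gap_and_integral_sq {τ : ℕ → Ω → ℕ} (hτ0 : ∀ ω, τ 0 ω = 0)
    (hgap : ∀ k, IdentDistrib (fun ω => (τ (k + 1) ω : ℝ) - τ k ω)
      (fun ω => (τ 1 ω : ℝ) - τ 0 ω) P P)
    (hτ2 : Integrable (fun ω => (τ 1 ω : ℝ) ^ 2) P) (C : ℝ) (k : ℕ) :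
    MemLp (fun ω => C * ((τ (k + 1) ω : ℝ) - τ k ω)) 2 P
      ∧ ∫ ω, (C * ((τ (k + 1) ω : ℝ) - τ k ω)) ^ 2 ∂P = C ^ 2 * ∫ ω, (τ 1 ω : ℝ) ^ 2 ∂P := by
  have hk := (hgap k).comp (measurable_const_mul C)
  have hk2 := hk.comp (measurable_id.pow_const 2)
  simp only [hτ0, CharP.cast_eq_zero, sub_zero, Function.comp_def, id] at hk hk2
  refine ⟨hk.memLp_iff.mpr ?_, hk2.integral_eq.trans ?_⟩
  · refine (memLp_two_iff_integrable_sq hk.aemeasurable_snd.aestronglyMeasurable).mpr ?_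
    simpa only [mul_pow] using hτ2.const_mul (C ^ 2)
  · simp only [mul_pow, integral_const_mul]

variable {ι : Type*} [Preorder ι] {G : Filtration ι m} {f : ι → Ω → ℝ} {i j : ι} {H : Ω → ℝ}

theorem Martingale.submartingale_abs (hf : Martingale f G P) :
    Submartingale (fun i ω => |f i ω|) G P :=
  hf.submartingale.sup hf.neg.submartingale

variable [IsFiniteMeasure P]

theorem Submartingale.integral_mul_le_integral_mul (hf : Submartingale f G P)
    (hij : i ≤ j) (hH : StronglyMeasurable[G i] H) (hH0 : 0 ≤ H)
    (hHi : Integrable (H * f i) P) (hHj : Integrable (H * f j) P) :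
    ∫ ω, H ω * f i ω ∂P ≤ ∫ ω, H ω * f j ω ∂P := by
  have hpull : P[H * f j | G i] =ᵐ[P] H * P[f j | G i] :=
    condExp_mul_of_stronglyMeasurable_left hH hHj (hf.integrable j)
  calc ∫ ω, H ω * f i ω ∂P ≤ ∫ ω, (H * P[f j | G i]) ω ∂P := by
        refine integral_mono_ae hHi (integrable_condExp.congr hpull) ?_
        filter_upwards [hf.ae_le_condExp hij] with ω hω
        exact mul_le_mul_of_nonneg_left hω (hH0 ω)
    _ = ∫ ω, (H * f j) ω ∂P := by
        rw [← integral_congr_ae hpull, integral_condExp (G.le i)]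

theorem Martingale.integral_mul_eq_integral_mul (hf : Martingale f G P)
    (hij : i ≤ j) (hH : StronglyMeasurable[G i] H) (hHj : Integrable (H * f j) P) :
    ∫ ω, H ω * f j ω ∂P = ∫ ω, H ω * f i ω ∂P := by
  have hpull : P[H * f j | G i] =ᵐ[P] H * P[f j | G i] :=
    condExp_mul_of_stronglyMeasurable_left hH hHj (hf.integrable j)
  calc ∫ ω, H ω * f j ω ∂P = ∫ ω, (H * P[f j | G i]) ω ∂P := by
        rw [← integral_congr_ae hpull, integral_condExp (G.le i)]; rfl
    _ = ∫ ω, H ω * f i ω ∂P := by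
        refine integral_congr_ae ?_
        filter_upwards [hf.condExp_ae_eq hij] with ω hω
        simp [hω]

theorem Martingale.integral_sq_eq_add_integral_sq_sub (hf : Martingale f G P)
    (hij : i ≤ j) (hi : MemLp (f i) 2 P) (hj : MemLp (f j) 2 P) :
    ∫ ω, f j ω ^ 2 ∂P = ∫ ω, f i ω ^ 2 ∂P + ∫ ω, (f j ω - f i ω) ^ 2 ∂P := by
  have hcross : ∫ ω, f i ω * f j ω ∂P = ∫ ω, f i ω ^ 2 ∂P := by
    simp only [hf.integral_mul_eq_integral_mul hij (hf.stronglyMeasurable i)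
      (hi.integrable_mul hj), sq]
  have hexp : ∀ ω, (f j ω - f i ω) ^ 2 = f j ω ^ 2 + f i ω ^ 2 - 2 * (f i ω * f j ω) :=
    fun ω => by ring
  have hsq : Integrable (fun ω => f j ω ^ 2 + f i ω ^ 2) P :=
    hj.integrable_sq.add hi.integrable_sq
  have hmul : Integrable (fun ω => 2 * (f i ω * f j ω)) P := (hi.integrable_mul hj).const_mul 2
  simp only [hexp]
  rw [integral_sub hsq hmul, integral_add hj.integrable_sq hi.integrable_sq, integral_const_mul,
    hcross]
  ring

theorem Martingale.integral_sq_le_add_sum {f : ℕ → Ω → ℝ} {G : Filtration ℕ m}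
    (hf : Martingale f G P) (hL2 : ∀ k, MemLp (f k) 2 P) {D : ℕ → Ω → ℝ}
    (hD : ∀ k, Integrable (fun ω => D k ω ^ 2) P) (hfD : ∀ k ω, |f (k + 1) ω - f k ω| ≤ D k ω)
    (n : ℕ) : ∫ ω, f n ω ^ 2 ∂P ≤ ∫ ω, f 0 ω ^ 2 ∂P + ∑ k ∈ range n, ∫ ω, D k ω ^ 2 ∂P := by
  induction n with
  | zero => simp
  | succ n ih =>
    have hstep : ∫ ω, (f (n + 1) ω - f n ω) ^ 2 ∂P ≤ ∫ ω, D n ω ^ 2 ∂P :=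
      integral_mono ((hL2 (n + 1)).sub (hL2 n)).integrable_sq (hD n) fun ω =>
        sq_le_sq' (abs_le.mp (hfD n ω)).1 (abs_le.mp (hfD n ω)).2
    rw [hf.integral_sq_eq_add_integral_sq_sub n.le_succ (hL2 n) (hL2 (n + 1)), sum_range_succ]
    linarith

section Doob

variable {f : ℕ → Ω → ℝ} {G : Filtration ℕ m}

theorem Submartingale.integral_partialSups_mul_sub_nonneg (hf : Submartingale f G P)
    (hf0 : 0 ≤ f) (hL2 : ∀ k, MemLp (f k) 2 P) (k : ℕ) :
    0 ≤ ∫ ω, partialSups f k ω * (f (k + 1) ω - f k ω) ∂P := by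
  have hmul : ∀ j, Integrable (partialSups f k * f j) P := fun j =>
    (MemLp.partialSups hL2 k).integrable_mul (hL2 j)
  have hSG : StronglyMeasurable[G k] (partialSups f k) :=
    .partialSups fun j hj => (hf.stronglyMeasurable j).mono (G.mono hj)
  have hS0 : 0 ≤ partialSups f k := (hf0 0).trans (le_partialSups_of_le f k.zero_le)
  have hsub := integral_sub (hmul (k + 1)) (hmul k)
  simp only [Pi.mul_apply, ← mul_sub] at hsub
  rw [hsub, sub_nonneg]
  exact hf.integral_mul_le_integral_mul k.le_succ hSG hS0 (hmul k) (hmul (k + 1))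

theorem Submartingale.integral_sq_partialSups_le (hf : Submartingale f G P) (hf0 : 0 ≤ f)
    (hL2 : ∀ k, MemLp (f k) 2 P) (n : ℕ) :
    ∫ ω, partialSups f n ω ^ 2 ∂P ≤ 4 * ∫ ω, f n ω ^ 2 ∂P := by
  have hincr : ∀ k, Integrable (fun ω => partialSups f k ω * (f (k + 1) ω - f k ω)) P :=
    fun k => (((MemLp.partialSups hL2 k).integrable_mul (hL2 (k + 1))).sub
      ((MemLp.partialSups hL2 k).integrable_mul (hL2 k))).congr
        (.of_forall fun ω => by simp [mul_sub])
  have hsq := (hL2 n).integrable_sq.const_mul 4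
  have hsum := (integrable_finsetSum (range n) fun k _ => hincr k).const_mul 4
  calc ∫ ω, partialSups f n ω ^ 2 ∂P
      ≤ ∫ ω, (4 * f n ω ^ 2
          - 4 * ∑ k ∈ range n, partialSups f k ω * (f (k + 1) ω - f k ω)) ∂P :=
        integral_mono (MemLp.partialSups hL2 n).integrable_sq (hsq.sub hsum) fun ω => by
          simpa only [Pi.partialSups_apply] using sq_partialSups_le (f · ω) n
    _ = 4 * ∫ ω, f n ω ^ 2 ∂P
          - 4 * ∑ k ∈ range n, ∫ ω, partialSups f k ω * (f (k + 1) ω - f k ω) ∂P := by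
        rw [integral_sub hsq hsum, integral_const_mul, integral_const_mul,
          integral_finsetSum _ fun k _ => hincr k]
    _ ≤ 4 * ∫ ω, f n ω ^ 2 ∂P := by
        linarith [sum_nonneg fun k (_ : k ∈ range n) =>
          hf.integral_partialSups_mul_sub_nonneg hf0 hL2 k]

theorem Martingale.integral_sq_partialSups_abs_le (hf : Martingale f G P) (hf0 : f 0 = 0)
    (hL2 : ∀ k, MemLp (f k) 2 P) {D : ℕ → Ω → ℝ} (hD : ∀ k, Integrable (fun ω => D k ω ^ 2) P)
    (hfD : ∀ k ω, |f (k + 1) ω - f k ω| ≤ D k ω) {c : ℝ} (hc : ∀ k, ∫ ω, D k ω ^ 2 ∂P ≤ c)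
    (n : ℕ) : ∫ ω, partialSups (fun k => |f k ω|) n ^ 2 ∂P ≤ 4 * (n * c) := by
  have hdoob := hf.submartingale_abs.integral_sq_partialSups_le (fun _ _ => abs_nonneg _)
    (fun k => (hL2 k).abs) n
  simp only [Pi.partialSups_apply, sq_abs] at hdoob
  refine hdoob.trans (mul_le_mul_of_nonneg_left ?_ (by norm_num))
  calc ∫ ω, f n ω ^ 2 ∂P ≤ ∫ ω, f 0 ω ^ 2 ∂P + ∑ k ∈ range n, ∫ ω, D k ω ^ 2 ∂P :=
        hf.integral_sq_le_add_sum hL2 hD hfD n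
    _ ≤ n * c := by
        simpa [hf0] using sum_le_card_nsmul (range n) _ c fun k _ => hc k

end Doob

end MeasureTheory

theorem stmt6_general {Ω : Type*} [m : MeasurableSpace Ω] (P : Measure Ω) [IsProbabilityMeasure P]
    (X : ℕ → Ω → ℝ) (C0 : ℝ)
    (hX0 : ∀ ω, X 0 ω = 0)
    (hinc : ∀ n ω, |X (n + 1) ω - X n ω| ≤ C0)
    (τ : ℕ → Ω → ℕ)
    (hτ0 : ∀ ω, τ 0 ω = 0)
    (hτmono : ∀ k ω, τ k ω < τ (k + 1) ω)
    (hident : ∀ k, IdentDistrib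
      (fun ω => (X (τ (k + 1) ω) ω - X (τ k ω) ω, ((τ (k + 1) ω : ℝ) - τ k ω)))
      (fun ω => (X (τ 1 ω) ω - X (τ 0 ω) ω, ((τ 1 ω : ℝ) - τ 0 ω))) P P)
    (G : Filtration ℕ m)
    (hmart : Martingale (fun k ω => X (τ k ω) ω) G P)
    (hτ2 : Integrable (fun ω => ((τ 1 ω : ℝ)) ^ 2) P) :
    ∃ K : ℝ, ∀ n : ℕ, 1 ≤ n →
      ∫ ω, ((Finset.range (n + 1)).sup' Finset.nonempty_range_add_one
        (fun i => |X i ω| ^ 2)) ∂P ≤ K * n := by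
  set M : ℕ → Ω → ℝ := fun k ω => X (τ k ω) ω
  set D : ℕ → Ω → ℝ := fun k ω => C0 * ((τ (k + 1) ω : ℝ) - τ k ω)
  set T := ∫ ω, (τ 1 ω : ℝ) ^ 2 ∂P
  have hD := memLp_const_mul_gap_and_integral_sq hτ0 (fun k => (hident k).comp measurable_snd)
    hτ2 C0
  have hMD : ∀ k ω, |M (k + 1) ω - M k ω| ≤ D k ω := fun k ω =>
    abs_sub_le_mul_of_abs_succ_sub_le (x := (X · ω)) (hinc · ω) (hτmono k ω).le
  have hM0 : M 0 = 0 := by funext ω; simp [M, hτ0, hX0]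
  have hML2 : ∀ k, MemLp (M k) 2 P := memLp_of_abs_succ_sub_le
    (fun k => (hmart.integrable k).aestronglyMeasurable) (hM0 ▸ MemLp.zero) (hD · |>.1) hMD
  have hDsq : ∀ k, ∫ ω, D k ω ^ 2 ∂P = C0 ^ 2 * T := fun k => (hD k).2
  have hT : 0 ≤ C0 ^ 2 * T := mul_nonneg (sq_nonneg _) (integral_nonneg fun _ => sq_nonneg _)
  refine ⟨12 * (C0 ^ 2 * T), fun n hn => ?_⟩
  have hS := (MemLp.partialSups (fun k => (hML2 k).abs) n).integrable_sq
  simp only [Pi.partialSups_apply, Pi.abs_apply] at hS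
  simp_rw [← partialSups_eq_sup'_range]
  calc _ ≤ 2 * ∫ ω, partialSups (fun k => |M k ω|) n ^ 2 ∂P
          + 2 * ∑ k ∈ range (n + 1), ∫ ω, D k ω ^ 2 ∂P :=
        integral_partialSups_sq_abs_le_of_renewal hinc
          (fun ω => strictMono_nat_of_lt_succ (hτmono · ω)) hτ0 n hS (hD · |>.1.integrable_sq)
    _ ≤ 2 * (4 * (n * (C0 ^ 2 * T))) + 2 * ((n + 1) * (C0 ^ 2 * T)) := by
        gcongr
        · exact hmart.integral_sq_partialSups_abs_le hM0 hML2 (hD · |>.1.integrable_sq) hMD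
            (hDsq · |>.le) n
        · simp [hDsq]
    _ ≤ 12 * (C0 ^ 2 * T) * n := by
        have : (1 : ℝ) ≤ n := by exact_mod_cast hn
        nlinarith

/-- For a process `X` with `X_0 = 0` and increments bounded by `C₀`,
admitting renewal times `τ_k` with i.i.d. increments `(X_{τ_{k+1}} - X_{τ_k}, τ_{k+1} - τ_k)`,
such that `(X_{τ_k})` is a martingale, `E[τ_1²] < ∞` and `E[τ_1] = a ≥ 1`, one has
`sup_{n ≥ 1} (1/n) E[max_{0 ≤ i ≤ n} |X_i|²] < ∞`. -/
theorem stmt6 {Ω : Type*} [m : MeasurableSpace Ω] (P : Measure Ω) [IsProbabilityMeasure P]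
    (X : ℕ → Ω → ℝ) (C0 : ℝ)
    (hmeasX : ∀ n, Measurable (X n))
    (hX0 : ∀ ω, X 0 ω = 0)
    (hinc : ∀ n ω, |X (n + 1) ω - X n ω| ≤ C0)
    (τ : ℕ → Ω → ℕ) (hmeasτ : ∀ k, Measurable (τ k))
    (hτ0 : ∀ ω, τ 0 ω = 0)
    (hτmono : ∀ k ω, τ k ω < τ (k + 1) ω)
    (a : ℝ) (ha : 1 ≤ a)
    (hindep : iIndepFun
      (fun k ω => (X (τ (k + 1) ω) ω - X (τ k ω) ω, ((τ (k + 1) ω : ℝ) - τ k ω))) P)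
    (hident : ∀ k, IdentDistrib
      (fun ω => (X (τ (k + 1) ω) ω - X (τ k ω) ω, ((τ (k + 1) ω : ℝ) - τ k ω)))
      (fun ω => (X (τ 1 ω) ω - X (τ 0 ω) ω, ((τ 1 ω : ℝ) - τ 0 ω))) P P)
    (G : Filtration ℕ m)
    (hmart : Martingale (fun k ω => X (τ k ω) ω) G P)
    (hτ2 : Integrable (fun ω => ((τ 1 ω : ℝ)) ^ 2) P)
    (hτmean : ∫ ω, (τ 1 ω : ℝ) ∂P = a) :
    ∃ K : ℝ, ∀ n : ℕ, 1 ≤ n →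
      ∫ ω, ((Finset.range (n + 1)).sup' Finset.nonempty_range_add_one
        (fun i => |X i ω| ^ 2)) ∂P ≤ K * n :=
  stmt6_general (m := m) P X C0 hX0 hinc τ hτ0 hτmono hident G hmart hτ2
end

section
/- Let $0 \le \beta \le 1$ and let $(Y_n)_{n\ge 0}$ be the simple random walk on $\mathbb{Z}^d$ with bias $\beta$ in direction $e_1$: at each step it moves by $+e_1$ with probability $(1+\beta)/(2d)$, by $-e_1$ with probability $(1-\beta)/(2d)$, and by $\pm e_i$ ($2 \le i \le d$) with probability $1/(2d)$ each, starting at $0$. Then for each $k \ge 1$, the probability of the event $\{Y_{2k} = 0 \text{ and } Y_j \ne 0 \text{ for } 1 \le j < 2k\}$ is a nonincreasing function of $\beta$ on $[0,1]$. -/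
noncomputable section
open scoped Classical

/-- The unit step of a nearest-neighbor walk on `ℤ^d` encoded by a direction and a sign. -/
def stepVec (d : ℕ) (s : Fin d × Bool) : Fin d → ℤ :=
  (if s.2 then (1 : ℤ) else -1) • Pi.single s.1 (1 : ℤ)

/-- The position after `n` steps of the path with step sequence `σ`. -/
def pathPos {d k : ℕ} (σ : Fin k → Fin d × Bool) (n : ℕ) : Fin d → ℤ :=
  ∑ i : Fin k, if (i : ℕ) < n then stepVec d (σ i) else 0

/-- One-step probability of the simple random walk on `ℤ^d` with bias `β` in direction `e₁`:
`(1+β)/(2d)` for `+e₁`, `(1-β)/(2d)` for `-e₁`, and `1/(2d)` for the other directions. -/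
def srwWeight (d : ℕ) [NeZero d] (β : ℝ) (s : Fin d × Bool) : ℝ :=
  if s.1 = 0 then (if s.2 then (1 + β) / (2 * d) else (1 - β) / (2 * d))
  else 1 / (2 * d)

/-- `P^s_β(Y_{2k} = 0 and Y_j ≠ 0 for 1 ≤ j < 2k)`: the probability that the biased
simple random walk started at `0` first returns to the origin at time `2k`. -/
def returnProb (d : ℕ) [NeZero d] (k : ℕ) (β : ℝ) : ℝ :=
  ∑ σ : Fin (2 * k) → Fin d × Bool,
    if pathPos σ (2 * k) = 0 ∧ (∀ j, 1 ≤ j → j < 2 * k → pathPos σ j ≠ 0)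
    then ∏ i, srwWeight d β (σ i) else 0

/-- for each `k ≥ 1`, the probability that the biased simple random walk
on `ℤ^d` first returns to the origin at time `2k` is nonincreasing in `β` on `[0,1]`. -/
theorem stmt7 (d : ℕ) [NeZero d] (k : ℕ) (hk : 1 ≤ k) :
    AntitoneOn (returnProb d k) (Set.Icc (0 : ℝ) 1) := by
  intro x hx y hy hxy
  unfold returnProb
  apply Finset.sum_le_sum
  intro σ _
  by_cases hcond : pathPos σ (2 * k) = 0 ∧ (∀ j, 1 ≤ j → j < 2 * k → pathPos σ j ≠ 0)
  · simp only [if_pos hcond]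
    set P : Fin (2 * k) → Prop := fun i => σ i = ((0 : Fin d), true) with hP
    set Q : Fin (2 * k) → Prop := fun i => σ i = ((0 : Fin d), false) with hQ
    set A := Finset.univ.filter P with hA
    set B := Finset.univ.filter Q with hB
    -- balance
    have h1 : pathPos σ (2 * k) = ∑ i, stepVec d (σ i) := by
      unfold pathPos
      exact Finset.sum_congr rfl fun i _ => if_pos i.isLt
    have h2 : (∑ i, stepVec d (σ i) (0 : Fin d)) = 0 := by
      have := congrFun hcond.1 (0 : Fin d)
      rw [h1] at this
      simpa [Finset.sum_apply] using this
    have h3 : ∀ i, stepVec d (σ i) (0 : Fin d)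
        = (if P i then 1 else if Q i then -1 else 0) := by
      intro i
      have hPi : P i ↔ (σ i).1 = 0 ∧ (σ i).2 = true := by rw [hP]; exact Prod.ext_iff
      have hQi : Q i ↔ (σ i).1 = 0 ∧ (σ i).2 = false := by rw [hQ]; exact Prod.ext_iff
      by_cases ha : (σ i).1 = 0 <;> cases hb : (σ i).2 <;>
        simp [stepVec, Pi.single_apply, ha, hb, hPi, hQi, eq_comm]
    have hQnotP : ∀ i, Q i → ¬ P i := by
      intro i hq hp
      rw [hP] at hp; rw [hQ] at hq
      rw [hp] at hq
      simp at hq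
    have hcard : (A.card : ℤ) = B.card := by
      have hsum : (∑ i, stepVec d (σ i) (0 : Fin d))
          = (A.card : ℤ) - B.card := by
        rw [Finset.sum_congr rfl fun i _ => h3 i,
          ← Finset.sum_filter_add_sum_filter_not Finset.univ P]
        have e1 : ∑ i ∈ Finset.univ.filter P, (if P i then (1:ℤ) else if Q i then -1 else 0)
            = A.card := by
          rw [Finset.sum_congr rfl fun i hi => if_pos (Finset.mem_filter.mp hi).2]
          simp [hA]
        have e2 : ∑ i ∈ Finset.univ.filter (fun i => ¬ P i),
            (if P i then (1:ℤ) else if Q i then -1 else 0) = -(B.card : ℤ) := by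
          rw [Finset.sum_congr rfl fun i hi => if_neg (Finset.mem_filter.mp hi).2]
          rw [← Finset.sum_filter, Finset.filter_filter]
          have : Finset.univ.filter (fun i => ¬ P i ∧ Q i) = B := by
            rw [hB]
            apply Finset.filter_congr
            intro i _
            constructor
            · exact fun h => h.2
            · exact fun h => ⟨hQnotP i h, h⟩
          rw [this]
          simp
        rw [e1, e2]; ring
      rw [hsum] at h2; linarith
    -- product formula
    have hprod : ∀ β : ℝ, (∏ i, srwWeight d β (σ i))
        = (1 + β) ^ A.card * (1 - β) ^ B.card * (1 / (2 * (d:ℝ))) ^ (2 * k) := by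
      intro β
      have hw : ∀ i, srwWeight d β (σ i)
          = (if P i then 1 + β else if Q i then 1 - β else 1) * (1 / (2 * (d:ℝ))) := by
        intro i
        have hPi : P i ↔ (σ i).1 = 0 ∧ (σ i).2 = true := by rw [hP]; exact Prod.ext_iff
        have hQi : Q i ↔ (σ i).1 = 0 ∧ (σ i).2 = false := by rw [hQ]; exact Prod.ext_iff
        by_cases ha : (σ i).1 = 0 <;> cases hb : (σ i).2 <;>
          simp [srwWeight, ha, hb, hPi, hQi] <;> ring
      rw [Finset.prod_congr rfl fun i _ => hw i, Finset.prod_mul_distrib,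
        Finset.prod_const, Finset.card_univ, Fintype.card_fin]
      congr 1
      rw [← Finset.prod_filter_mul_prod_filter_not Finset.univ P]
      have e1 : ∏ i ∈ Finset.univ.filter P, (if P i then 1 + β else if Q i then 1 - β else 1)
          = (1 + β) ^ A.card := by
        rw [Finset.prod_congr rfl fun i hi => if_pos (Finset.mem_filter.mp hi).2]
        simp [hA]
      have e2 : ∏ i ∈ Finset.univ.filter (fun i => ¬ P i),
          (if P i then 1 + β else if Q i then 1 - β else 1) = (1 - β) ^ B.card := by
        rw [Finset.prod_congr rfl fun i hi => if_neg (Finset.mem_filter.mp hi).2]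
        rw [← Finset.prod_filter, Finset.filter_filter]
        have : Finset.univ.filter (fun i => ¬ P i ∧ Q i) = B := by
          rw [hB]
          apply Finset.filter_congr
          intro i _
          constructor
          · exact fun h => h.2
          · exact fun h => ⟨hQnotP i h, h⟩
        rw [this]
        simp
      rw [e1, e2]
    have hAB : A.card = B.card := by exact_mod_cast hcard
    rw [hprod x, hprod y, hAB]
    have hx0 : (0:ℝ) ≤ x := hx.1
    have hy1 : y ≤ 1 := hy.2
    have key : (1 + y) ^ B.card * (1 - y) ^ B.card ≤ (1 + x) ^ B.card * (1 - x) ^ B.card := by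
      rw [← mul_pow, ← mul_pow]
      apply pow_le_pow_left₀
      · nlinarith
      · nlinarith
    have hc : (0:ℝ) ≤ (1 / (2 * (d:ℝ))) ^ (2 * k) := by positivity
    exact mul_le_mul_of_nonneg_right key hc
  · simp [hcond]
end
end
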